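/- For d ≥ 1, the super-operator Ψ₀ from d×d matrices to (d+1)×(d+1) matrices defined by letting Ψ₀[X] have (Tr(X)·I_d + Xᵀ)/(d+1) as its top-left d×d block and zeros elsewhere (where Xᵀ is the transpose of X) is a channel, i.e. it is completely positive and trace-preserving. -/

import Mathlib

open scoped Kronecker ComplexOrder Matrix

namespace ChannelDiscrimination

/-- The trace norm `Tr √(Aᴴ A)` of a complex square matrix. -/
noncomputable def traceNorm {ι : Type*} [Fintype ι] [DecidableEq ι]
    (A : Matrix ι ι ℂ) : ℝ :=
  (((Matrix.posSemidef_conjTranspose_mul_self A).1.eigenvectorUnitary : Matrix ι ι ℂ) *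
    Matrix.diagonal (((↑) : ℝ → ℂ) ∘ (√·) ∘ (Matrix.posSemidef_conjTranspose_mul_self A).1.eigenvalues) *
    (star (Matrix.posSemidef_conjTranspose_mul_self A).1.eigenvectorUnitary : Matrix ι ι ℂ)).trace.re

/-- A state: a positive semidefinite matrix of trace one. -/
def IsState {ι : Type*} [Fintype ι] (ρ : Matrix ι ι ℂ) : Prop :=
  ρ.PosSemidef ∧ ρ.trace = 1

/-- Separability of a bipartite matrix on `ℂ^m ⊗ ℂ^n`. -/
def IsSeparable {m n : ℕ} (σ : Matrix (Fin m × Fin n) (Fin m × Fin n) ℂ) : Prop :=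
  ∃ (N : ℕ) (p : Fin N → ℝ) (ρ : Fin N → Matrix (Fin m) (Fin m) ℂ)
    (τ : Fin N → Matrix (Fin n) (Fin n) ℂ),
    (∀ i, 0 ≤ p i) ∧ (∑ i, p i = 1) ∧ (∀ i, IsState (ρ i)) ∧ (∀ i, IsState (τ i)) ∧
    σ = ∑ i, (p i : ℂ) • (ρ i ⊗ₖ τ i)

/-- `Φ ⊗ id_n` for a super-operator `Φ` from `m×m` to `k×k` matrices. -/
def tensorId {m k : ℕ} (n : ℕ)
    (Φ : Matrix (Fin m) (Fin m) ℂ →ₗ[ℂ] Matrix (Fin k) (Fin k) ℂ) :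
    Matrix (Fin m × Fin n) (Fin m × Fin n) ℂ →ₗ[ℂ]
      Matrix (Fin k × Fin n) (Fin k × Fin n) ℂ where
  toFun M := Matrix.of fun p q => Φ (Matrix.of fun i j => M (i, p.2) (j, q.2)) p.1 q.1
  map_add' M N := by
    ext p q
    show Φ ((Matrix.of fun i j => M (i, p.2) (j, q.2)) +
        (Matrix.of fun i j => N (i, p.2) (j, q.2))) p.1 q.1 = _
    rw [map_add]
    rfl
  map_smul' c M := by
    ext p q
    show Φ (c • (Matrix.of fun i j => M (i, p.2) (j, q.2))) p.1 q.1 = _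
    rw [map_smul]
    rfl

/-- A positive super-operator. -/
def IsPositiveMap {m k : ℕ}
    (Φ : Matrix (Fin m) (Fin m) ℂ →ₗ[ℂ] Matrix (Fin k) (Fin k) ℂ) : Prop :=
  ∀ X : Matrix (Fin m) (Fin m) ℂ, X.PosSemidef → (Φ X).PosSemidef

/-- A trace-preserving super-operator. -/
def IsTracePreserving {m k : ℕ}
    (Φ : Matrix (Fin m) (Fin m) ℂ →ₗ[ℂ] Matrix (Fin k) (Fin k) ℂ) : Prop :=
  ∀ X : Matrix (Fin m) (Fin m) ℂ, (Φ X).trace = X.trace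

/-- A completely positive super-operator: `Φ ⊗ id_n` is positive for every `n`. -/
def IsCompletelyPositive {m k : ℕ}
    (Φ : Matrix (Fin m) (Fin m) ℂ →ₗ[ℂ] Matrix (Fin k) (Fin k) ℂ) : Prop :=
  ∀ (n : ℕ) (M : Matrix (Fin m × Fin n) (Fin m × Fin n) ℂ),
    M.PosSemidef → (tensorId n Φ M).PosSemidef

/-- A (quantum) channel: completely positive and trace-preserving. -/
def IsChannel {m k : ℕ}
    (Φ : Matrix (Fin m) (Fin m) ℂ →ₗ[ℂ] Matrix (Fin k) (Fin k) ℂ) : Prop :=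
  IsCompletelyPositive Φ ∧ IsTracePreserving Φ

/-- An entanglement-breaking channel. -/
def IsEntanglementBreaking {m k : ℕ}
    (Φ : Matrix (Fin m) (Fin m) ℂ →ₗ[ℂ] Matrix (Fin k) (Fin k) ℂ) : Prop :=
  IsChannel Φ ∧ ∀ (n : ℕ) (ρ : Matrix (Fin m × Fin n) (Fin m × Fin n) ℂ),
    IsState ρ → IsSeparable (tensorId n Φ ρ)

/-- `pad1 M c` is the `(k+1)×(k+1)` matrix with `M` as its top-left `k×k` block,
`c` in the bottom-right corner, and zeros elsewhere. -/
def pad1 {k : ℕ} (M : Matrix (Fin k) (Fin k) ℂ) (c : ℂ) :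
    Matrix (Fin (k + 1)) (Fin (k + 1)) ℂ :=
  Matrix.of fun a b =>
    Fin.lastCases (Fin.lastCases c (fun _ => 0) b)
      (fun i => Fin.lastCases 0 (fun j => M i j) b) a

/-- Partial transpose on the first tensor factor. -/
def ptransposeFst {d n : ℕ} (ρ : Matrix (Fin d × Fin n) (Fin d × Fin n) ℂ) :
    Matrix (Fin d × Fin n) (Fin d × Fin n) ℂ :=
  Matrix.of fun p q => ρ (q.1, p.2) (p.1, q.2)


/-! Ψ₀ is the isometric embedding `ℂ^d → ℂ^(d+1)`, applied by conjugation, after a positive multiple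
of `X ↦ Tr(X)·I + Xᵀ`. With `K_ij = E_ij + E_ji` one has `Σ_ij K_ij X K_ijᴴ = 2 (Tr(X)·I + Xᵀ)`, and a
conjugation `X ↦ K X Kᴴ` is completely positive because its amplification is conjugation by
`K ⊗ I`. Complete positivity is preserved by sums, nonnegative multiples and composition. -/

section CompletelyPositive

variable {m k : ℕ}

lemma tensorId_add (n : ℕ) (Φ Ψ : Matrix (Fin m) (Fin m) ℂ →ₗ[ℂ] Matrix (Fin k) (Fin k) ℂ) :
    tensorId n (Φ + Ψ) = tensorId n Φ + tensorId n Ψ :=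
  rfl

lemma tensorId_smul (n : ℕ) (c : ℂ)
    (Φ : Matrix (Fin m) (Fin m) ℂ →ₗ[ℂ] Matrix (Fin k) (Fin k) ℂ) :
    tensorId n (c • Φ) = c • tensorId n Φ :=
  rfl

lemma tensorId_comp {l : ℕ} (n : ℕ)
    (Φ : Matrix (Fin k) (Fin k) ℂ →ₗ[ℂ] Matrix (Fin l) (Fin l) ℂ)
    (Ψ : Matrix (Fin m) (Fin m) ℂ →ₗ[ℂ] Matrix (Fin k) (Fin k) ℂ) :
    tensorId n (Φ ∘ₗ Ψ) = tensorId n Φ ∘ₗ tensorId n Ψ :=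
  rfl

lemma isCompletelyPositive_zero :
    IsCompletelyPositive (0 : Matrix (Fin m) (Fin m) ℂ →ₗ[ℂ] Matrix (Fin k) (Fin k) ℂ) :=
  fun _ _ _ => Matrix.PosSemidef.zero

namespace IsCompletelyPositive

variable {Φ Ψ : Matrix (Fin m) (Fin m) ℂ →ₗ[ℂ] Matrix (Fin k) (Fin k) ℂ}

lemma add (hΦ : IsCompletelyPositive Φ) (hΨ : IsCompletelyPositive Ψ) :
    IsCompletelyPositive (Φ + Ψ) :=
  fun n M hM => by
    rw [tensorId_add]
    exact (hΦ n M hM).add (hΨ n M hM)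

lemma smul (hΦ : IsCompletelyPositive Φ) {c : ℂ} (hc : 0 ≤ c) : IsCompletelyPositive (c • Φ) :=
  fun n M hM => by
    rw [tensorId_smul]
    exact (hΦ n M hM).smul hc

lemma sum {ι : Type*} (s : Finset ι)
    {Φ : ι → Matrix (Fin m) (Fin m) ℂ →ₗ[ℂ] Matrix (Fin k) (Fin k) ℂ}
    (hΦ : ∀ i ∈ s, IsCompletelyPositive (Φ i)) : IsCompletelyPositive (∑ i ∈ s, Φ i) :=
  Finset.sum_induction _ _ (fun _ _ => add) isCompletelyPositive_zero hΦ

lemma comp {l : ℕ} {Φ : Matrix (Fin k) (Fin k) ℂ →ₗ[ℂ] Matrix (Fin l) (Fin l) ℂ}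
    (hΦ : IsCompletelyPositive Φ) (hΨ : IsCompletelyPositive Ψ) :
    IsCompletelyPositive (Φ ∘ₗ Ψ) :=
  fun n M hM => by
    rw [tensorId_comp]
    exact hΦ n _ (hΨ n M hM)

end IsCompletelyPositive

def conjMap (K : Matrix (Fin k) (Fin m) ℂ) :
    Matrix (Fin m) (Fin m) ℂ →ₗ[ℂ] Matrix (Fin k) (Fin k) ℂ where
  toFun X := K * X * Kᴴ
  map_add' X Y := by rw [Matrix.mul_add, Matrix.add_mul]
  map_smul' c X := by rw [Matrix.mul_smul, Matrix.smul_mul]; rfl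

lemma tensorId_conjMap (n : ℕ) (K : Matrix (Fin k) (Fin m) ℂ)
    (M : Matrix (Fin m × Fin n) (Fin m × Fin n) ℂ) :
    tensorId n (conjMap K) M =
      (K ⊗ₖ (1 : Matrix (Fin n) (Fin n) ℂ)) * M * (K ⊗ₖ (1 : Matrix (Fin n) (Fin n) ℂ))ᴴ := by
  ext ⟨a, p⟩ ⟨b, q⟩
  simp [tensorId, conjMap, Matrix.mul_apply, Fintype.sum_prod_type, Matrix.one_apply,
    Finset.sum_mul, apply_ite (starRingEnd ℂ)]

lemma isCompletelyPositive_conjMap (K : Matrix (Fin k) (Fin m) ℂ) :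
    IsCompletelyPositive (conjMap K) :=
  fun n M hM => by
    rw [tensorId_conjMap]
    exact hM.mul_mul_conjTranspose_same _

end CompletelyPositive

section WernerHolevo

variable {d : ℕ}

open Matrix in
lemma sum_conj_single_add_single (X : Matrix (Fin d) (Fin d) ℂ) :
    ∑ i, ∑ j, (single i j 1 + single j i 1) * X * (single i j 1 + single j i 1)ᴴ =
      (2 : ℂ) • (X.trace • 1 + Xᵀ) := by
  have h : ∀ i j, (single i j 1 + single j i 1) * X * (single i j 1 + single j i 1)ᴴ =
      single i i (X j j) + single i j (X j i) + single j i (X i j) + single j j (X i i) := by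
    intro i j
    simp only [conjTranspose_add, conjTranspose_single, star_one, Matrix.add_mul,
      Matrix.mul_add, single_mul_mul_single, one_mul, mul_one]
    abel
  have hdiag : ∑ i, ∑ j, single i i (X j j) = X.trace • (1 : Matrix (Fin d) (Fin d) ℂ) := by
    ext a b
    simp [Matrix.sum_apply, Matrix.single_apply, Matrix.one_apply, Matrix.trace, ite_and]
  have htr : ∑ i, ∑ j, single i j (X j i) = Xᵀ := sum_sum_single _
  simp_rw [h, Finset.sum_add_distrib]
  rw [hdiag, htr, Finset.sum_comm (f := fun i j => single j i (X i j)), htr,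
    Finset.sum_comm (f := fun i j => single j j (X i i)), hdiag, two_smul]
  abel

def traceTransposeMap (d : ℕ) : Matrix (Fin d) (Fin d) ℂ →ₗ[ℂ] Matrix (Fin d) (Fin d) ℂ where
  toFun X := X.trace • 1 + Xᵀ
  map_add' X Y := by
    rw [Matrix.trace_add, add_smul, Matrix.transpose_add]
    abel
  map_smul' c X := by
    rw [Matrix.trace_smul, Matrix.transpose_smul, smul_add, smul_assoc]
    rfl

lemma isCompletelyPositive_traceTransposeMap : IsCompletelyPositive (traceTransposeMap d) := by
  have h : traceTransposeMap d = (2 : ℂ)⁻¹ • ∑ i, ∑ j,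
      conjMap (Matrix.single i j 1 + Matrix.single j i 1) := by
    ext1 X
    simp only [LinearMap.smul_apply, LinearMap.sum_apply]
    change X.trace • 1 + Xᵀ = (2 : ℂ)⁻¹ • ∑ i, ∑ j,
      (Matrix.single i j 1 + Matrix.single j i 1) * X * (Matrix.single i j 1 + Matrix.single j i 1)ᴴ
    rw [sum_conj_single_add_single, inv_smul_smul₀ two_ne_zero]
  rw [h]
  exact (IsCompletelyPositive.sum _ fun i _ => IsCompletelyPositive.sum _ fun j _ =>
    isCompletelyPositive_conjMap _).smul (by positivity)

def padEmbedding (d : ℕ) : Matrix (Fin (d + 1)) (Fin d) ℂ :=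
  (1 : Matrix (Fin (d + 1)) (Fin (d + 1)) ℂ).submatrix id Fin.castSucc

lemma conjMap_padEmbedding (M : Matrix (Fin d) (Fin d) ℂ) :
    conjMap (padEmbedding d) M = pad1 M 0 := by
  ext a b
  induction a using Fin.lastCases <;> induction b using Fin.lastCases <;>
    simp [conjMap, padEmbedding, pad1, Matrix.mul_apply, Matrix.one_apply,
      (Fin.castSucc_ne_last _).symm]

lemma trace_pad1 (M : Matrix (Fin d) (Fin d) ℂ) (c : ℂ) : (pad1 M c).trace = M.trace + c := by
  simp [Matrix.trace, Fin.sum_univ_castSucc, pad1]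

end WernerHolevo

theorem Psi0_is_channel_general
    {d : ℕ}
    (Ψ₀ : Matrix (Fin d) (Fin d) ℂ →ₗ[ℂ] Matrix (Fin (d + 1)) (Fin (d + 1)) ℂ)
    (hΨ₀ : ∀ X : Matrix (Fin d) (Fin d) ℂ,
      Ψ₀ X = pad1 (((d : ℂ) + 1)⁻¹ • (X.trace • (1 : Matrix (Fin d) (Fin d) ℂ) + Xᵀ)) 0) :
    IsChannel Ψ₀ := by
  refine ⟨?_, fun X => ?_⟩
  · have h : Ψ₀ = conjMap (padEmbedding d) ∘ₗ (((d : ℂ) + 1)⁻¹ • traceTransposeMap d) := by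
      ext1 X
      rw [hΨ₀, LinearMap.comp_apply, conjMap_padEmbedding]
      rfl
    rw [h]
    exact (isCompletelyPositive_conjMap _).comp
      (isCompletelyPositive_traceTransposeMap.smul (by positivity))
  · rw [hΨ₀, trace_pad1, add_zero, Matrix.trace_smul, Matrix.trace_add, Matrix.trace_smul,
      Matrix.trace_one, Matrix.trace_transpose, Fintype.card_fin, smul_eq_mul, smul_eq_mul]
    have hd : (d : ℂ) + 1 ≠ 0 := Nat.cast_add_one_ne_zero d
    field_simp

/-- For `d ≥ 1`, the super-operator `Ψ₀[X] = pad1 ((Tr(X)·I_d + Xᵀ)/(d+1)) 0`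
is a channel. -/
theorem Psi0_is_channel
    {d : ℕ} (hd : 1 ≤ d)
    (Ψ₀ : Matrix (Fin d) (Fin d) ℂ →ₗ[ℂ] Matrix (Fin (d + 1)) (Fin (d + 1)) ℂ)
    (hΨ₀ : ∀ X : Matrix (Fin d) (Fin d) ℂ,
      Ψ₀ X = pad1 (((d : ℂ) + 1)⁻¹ • (X.trace • (1 : Matrix (Fin d) (Fin d) ℂ) + Xᵀ)) 0) :
    IsChannel Ψ₀ :=
  Psi0_is_channel_general Ψ₀ hΨ₀

end ChannelDiscrimination
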